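/- arXiv:2306.12236 — 12 statements merged into one kernel-verified Lean document; each statement's English description precedes it below -/
import Mathlib

section
/- Let p be an odd prime and let ρ : (ZMod p)ˣ →* Equiv.Perm {a : ZMod p // a ≠ 0} be the group homomorphism sending a unit u to the permutation a ↦ u·a of the nonzero elements of ZMod p. Then the centralizer of ρ.range in Equiv.Perm {a : ZMod p // a ≠ 0} equals ρ.range itself; in particular this centralizer is a cyclic group of order p − 1. -/
/-!
A commutative group acting transitively is self-centralizing: if `σ` commutes with every
`ρ g` and `σ x₀ = ρ h x₀`, then `σ (ρ g x₀) = ρ g (ρ h x₀) = ρ h (ρ g x₀)`, so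
`σ = ρ h`.
The units of a field act on its nonzero elements transitively and freely, so the centralizer
is a copy of `(ZMod p)ˣ`, which is cyclic of order `p - 1`.
-/

open Subgroup

namespace MonoidHom

section Transitive

variable {G α : Type*} [CommGroup G] (ρ : G →* Equiv.Perm α)

theorem centralizer_range_eq_range_of_transitive (x₀ : α)
    (htrans : ∀ x, ∃ g, ρ g x₀ = x) :
    centralizer (ρ.range : Set (Equiv.Perm α)) = ρ.range := by
  refine le_antisymm (fun σ hσ ↦ ?_) (le_centralizer ρ.range)
  obtain ⟨h, hh⟩ := htrans (σ x₀)
  refine ⟨h, Equiv.ext fun x ↦ ?_⟩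
  obtain ⟨g, rfl⟩ := htrans x
  have hcomm : ρ g * σ = σ * ρ g := mem_centralizer_iff.mp hσ (ρ g) ⟨g, rfl⟩
  calc ρ h (ρ g x₀) = ρ g (ρ h x₀) := by
        rw [← Equiv.Perm.mul_apply, ← map_mul, mul_comm, map_mul, Equiv.Perm.mul_apply]
    _ = σ (ρ g x₀) := by rw [hh, ← Equiv.Perm.mul_apply, hcomm, Equiv.Perm.mul_apply]

end Transitive

section UnitsOfField

variable {K : Type*} [Field K] {ρ : Kˣ →* Equiv.Perm {a : K // a ≠ 0}}
  (hρ : ∀ (u : Kˣ) (a : {a : K // a ≠ 0}), (ρ u a : K) = u * a)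
include hρ

theorem apply_one_eq_of_forall_apply_eq_mul (u : Kˣ) : (ρ u ⟨1, one_ne_zero⟩ : K) = u := by
  rw [hρ, mul_one]

theorem exists_apply_one_eq_of_forall_apply_eq_mul (a : {a : K // a ≠ 0}) :
    ∃ u, ρ u ⟨1, one_ne_zero⟩ = a :=
  ⟨Units.mk0 a a.2, Subtype.ext (apply_one_eq_of_forall_apply_eq_mul hρ _)⟩

theorem injective_of_forall_apply_eq_mul : Function.Injective ρ := fun u v huv ↦ Units.ext <| by
  rw [← apply_one_eq_of_forall_apply_eq_mul hρ u, ← apply_one_eq_of_forall_apply_eq_mul hρ v,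
    huv]

end UnitsOfField

end MonoidHom

theorem stmt_0_general (p : ℕ) [Fact p.Prime]
    (ρ : (ZMod p)ˣ →* Equiv.Perm {a : ZMod p // a ≠ 0})
    (hρ : ∀ (u : (ZMod p)ˣ) (a : {a : ZMod p // a ≠ 0}),
      ((ρ u a : {a : ZMod p // a ≠ 0}) : ZMod p) = (u : ZMod p) * (a : ZMod p)) :
    Subgroup.centralizer (ρ.range : Set (Equiv.Perm {a : ZMod p // a ≠ 0})) = ρ.range ∧
    IsCyclic ↥(Subgroup.centralizer (ρ.range : Set (Equiv.Perm {a : ZMod p // a ≠ 0}))) ∧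
    Nat.card ↥(Subgroup.centralizer (ρ.range : Set (Equiv.Perm {a : ZMod p // a ≠ 0}))) = p - 1 := by
  have hcent := ρ.centralizer_range_eq_range_of_transitive _
    (MonoidHom.exists_apply_one_eq_of_forall_apply_eq_mul hρ)
  have hiso : (ZMod p)ˣ ≃* ρ.range :=
    MonoidHom.ofInjective (MonoidHom.injective_of_forall_apply_eq_mul hρ)
  refine ⟨hcent, ?_, ?_⟩
  · rw [hcent]
    exact isCyclic_of_surjective hiso hiso.surjective
  · rw [hcent, ← Nat.card_congr hiso.toEquiv, Nat.card_eq_fintype_card, ZMod.card_units]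

/-- For an odd prime `p`, the centralizer in the symmetric group on the
nonzero elements of `ZMod p` of the range of the multiplication action
`ρ : (ZMod p)ˣ →* Equiv.Perm {a : ZMod p // a ≠ 0}` equals `ρ.range`; in particular
it is cyclic of order `p - 1`. -/
theorem stmt_0 (p : ℕ) [Fact p.Prime] (hodd : Odd p)
    (ρ : (ZMod p)ˣ →* Equiv.Perm {a : ZMod p // a ≠ 0})
    (hρ : ∀ (u : (ZMod p)ˣ) (a : {a : ZMod p // a ≠ 0}),
      ((ρ u a : {a : ZMod p // a ≠ 0}) : ZMod p) = (u : ZMod p) * (a : ZMod p)) :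
    Subgroup.centralizer (ρ.range : Set (Equiv.Perm {a : ZMod p // a ≠ 0})) = ρ.range ∧
    IsCyclic ↥(Subgroup.centralizer (ρ.range : Set (Equiv.Perm {a : ZMod p // a ≠ 0}))) ∧
    Nat.card ↥(Subgroup.centralizer (ρ.range : Set (Equiv.Perm {a : ZMod p // a ≠ 0}))) = p - 1 :=
  stmt_0_general p ρ hρ
end

section
/- Let n ≥ 3 be an odd natural number. The subgroup C (the centralizer in Equiv.Perm {a : ZMod n // a ≠ 0} of the image of the unit-multiplication action of (ZMod n)ˣ) is a cyclic group if and only if n is prime. -/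
/-!
If `n` is prime, `ZMod n` is a field, and a permutation commuting with every multiplication
`a ↦ u * a` is determined by the image `c` of `1`: it is `a ↦ c * a`. So the centralizer lies in
the image of the cyclic group `(ZMod n)ˣ`.

If `n` is composite, the orbits of `(ZMod n)ˣ` on the nonzero residues are unions of units or of
non-units, and there are nonzero non-units. Negating only the units and negating only the
non-units are then two distinct involutions in the centralizer (negation has no fixed points since
`n` is odd), whereas a finite cyclic group has at most one involution.
-/

open Equiv Subgroup

section CommRing

variable {R : Type*} [CommRing R]

open Classical in
noncomputable def negOn (p : R → Prop) (hp : ∀ a, p (-a) ↔ p a) : Perm {a : R // a ≠ 0} :=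
  Function.Involutive.toPerm (fun a => if p a then ⟨-a, neg_ne_zero.mpr a.2⟩ else a) <| by
    intro a
    by_cases h : p a <;> simp [h, hp]

variable {p : R → Prop} {hp : ∀ a, p (-a) ↔ p a} {a : {a : R // a ≠ 0}}

open Classical in
lemma negOn_apply : negOn p hp a = if p a then ⟨-a, neg_ne_zero.mpr a.2⟩ else a := rfl

lemma negOn_apply_of_pos (h : p a) : (negOn p hp a : R) = -a := by
  simp [negOn_apply, h]

lemma negOn_apply_of_neg (h : ¬ p a) : negOn p hp a = a := by
  simp [negOn_apply, h]

variable (p hp) in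
lemma negOn_sq : negOn p hp ^ 2 = 1 :=
  Perm.ext (negOn p hp).left_inv

variable (p hp) in
lemma negOn_ne_one (hpa : p a) (hneg : -(a : R) ≠ a) : negOn p hp ≠ 1 := fun h =>
  hneg <| by rw [← negOn_apply_of_pos (hp := hp) hpa, h, Perm.one_apply]

variable (ρ : Rˣ →* Perm {a : R // a ≠ 0}) (hρ : ∀ u a, (ρ u a : R) = u * a)
include hρ

lemma negOn_mem_centralizer_range (hpu : ∀ (u : Rˣ) a, p (u * a) ↔ p a) :
    negOn p hp ∈ centralizer (ρ.range : Set (Perm {a : R // a ≠ 0})) := by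
  rw [mem_centralizer_iff]
  rintro _ ⟨u, rfl⟩
  ext a
  by_cases h : p a
  · have hu : p (ρ u a) := by rwa [hρ, hpu]
    simp [negOn_apply_of_pos h, negOn_apply_of_pos hu, hρ]
  · have hu : ¬ p (ρ u a) := by rwa [hρ, hpu]
    simp [negOn_apply_of_neg h, negOn_apply_of_neg hu]

end CommRing

section Field

variable {K : Type*} [Field K] (ρ : Kˣ →* Perm {a : K // a ≠ 0}) (hρ : ∀ u a, (ρ u a : K) = u * a)
include hρ

lemma centralizer_range_le_range :
    centralizer (ρ.range : Set (Perm {a : K // a ≠ 0})) ≤ ρ.range := by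
  intro σ hσ
  let one : {a : K // a ≠ 0} := ⟨1, one_ne_zero⟩
  refine ⟨Units.mk0 _ (σ one).2, Perm.ext fun a => Subtype.ext ?_⟩
  have h_one : ρ (Units.mk0 _ a.2) one = a := Subtype.ext <| by simp [hρ, one]
  have hcomm := congr($(mem_centralizer_iff.mp hσ (ρ (Units.mk0 _ a.2)) ⟨_, rfl⟩) one)
  simp only [Perm.mul_apply, h_one] at hcomm
  rw [hρ, ← hcomm, hρ, Units.val_mk0, Units.val_mk0, mul_comm]

lemma isCyclic_centralizer_range [Finite K] :
    IsCyclic (centralizer (ρ.range : Set (Perm {a : K // a ≠ 0}))) :=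
  have : IsCyclic ρ.range := isCyclic_of_surjective ρ.rangeRestrict ρ.rangeRestrict_surjective
  isCyclic_of_le (centralizer_range_le_range ρ hρ)

end Field

lemma IsCyclic.eq_of_sq_eq_one {G : Type*} [Group G] [Finite G] [IsCyclic G] {x y : G}
    (hx : x ^ 2 = 1) (hy : y ^ 2 = 1) (hx1 : x ≠ 1) (hy1 : y ≠ 1) : x = y := by
  classical
  have := Fintype.ofFinite G
  by_contra hxy
  have hsub : ({1, x, y} : Finset G) ⊆ ({g | g ^ 2 = 1} : Finset G) := by
    simp [Finset.insert_subset_iff, hx, hy]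
  have hcard : ({1, x, y} : Finset G).card = 3 := by
    rw [Finset.card_insert_of_notMem (by simp [hx1.symm, hy1.symm]),
      Finset.card_pair hxy]
  have := Finset.card_le_card hsub
  have := IsCyclic.card_pow_eq_one_le (α := G) two_pos
  omega

section NonCyclic

variable {R : Type*} [CommRing R] [Nontrivial R] [Finite R]
  (ρ : Rˣ →* Perm {a : R // a ≠ 0}) (hρ : ∀ u a, (ρ u a : R) = u * a)
include hρ

lemma not_isCyclic_centralizer_range (hneg : ∀ a : R, a ≠ 0 → -a ≠ a)
    (hR : ∃ d : R, d ≠ 0 ∧ ¬ IsUnit d) :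
    ¬ IsCyclic (centralizer (ρ.range : Set (Perm {a : R // a ≠ 0}))) := by
  intro hcyc
  obtain ⟨d, hd0, hdu⟩ := hR
  have hu : ∀ a : R, IsUnit (-a) ↔ IsUnit a := IsUnit.neg_iff
  have hnu : ∀ a : R, ¬ IsUnit (-a) ↔ ¬ IsUnit a := fun a => not_congr (hu a)
  have h_eq := hcyc.eq_of_sq_eq_one
    (x := ⟨negOn IsUnit hu, negOn_mem_centralizer_range ρ hρ Units.isUnit_units_mul⟩)
    (y := ⟨negOn (¬ IsUnit ·) hnu,
      negOn_mem_centralizer_range ρ hρ fun u a => not_congr (Units.isUnit_units_mul u a)⟩)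
    (Subtype.ext (negOn_sq IsUnit hu)) (Subtype.ext (negOn_sq (¬ IsUnit ·) hnu))
    (fun h => negOn_ne_one IsUnit hu (a := ⟨1, one_ne_zero⟩) isUnit_one
      (hneg 1 one_ne_zero) congr(($h).1))
    (fun h => negOn_ne_one (¬ IsUnit ·) hnu (a := ⟨d, hd0⟩) hdu (hneg d hd0)
      congr(($h).1))
  have h_one := congr((($h_eq).1 ⟨1, one_ne_zero⟩ : R))
  rw [negOn_apply_of_pos isUnit_one,
    negOn_apply_of_neg (p := (¬ IsUnit ·)) (not_not.mpr isUnit_one)] at h_one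
  exact hneg 1 one_ne_zero h_one

end NonCyclic

lemma ZMod.neg_ne_self_of_odd {n : ℕ} (hodd : Odd n) {a : ZMod n} (ha : a ≠ 0) : -a ≠ a := by
  rw [Ne, ZMod.neg_eq_self_iff]
  rintro (h | h)
  · exact ha h
  · exact Nat.not_even_iff_odd.mpr hodd ⟨a.val, by omega⟩

lemma ZMod.exists_ne_zero_not_isUnit {n : ℕ} (hn : n ≠ 1) (hnp : ¬ n.Prime) :
    ∃ a : ZMod n, a ≠ 0 ∧ ¬ IsUnit a := by
  have hp := Nat.minFac_prime hn
  refine ⟨n.minFac, ?_, ?_⟩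
  · rw [Ne, ZMod.natCast_eq_zero_iff]
    intro h
    exact hnp (Nat.dvd_antisymm (Nat.minFac_dvd n) h ▸ hp)
  · rw [ZMod.isUnit_iff_coprime, hp.coprime_iff_not_dvd, not_not]
    exact Nat.minFac_dvd n

/-- For odd `n ≥ 3`, the centralizer in the symmetric group on the nonzero
elements of `ZMod n` of the range of the multiplication action of `(ZMod n)ˣ` is a cyclic
group if and only if `n` is prime. -/
theorem stmt_1 (n : ℕ) (hn : 3 ≤ n) (hodd : Odd n)
    (ρ : (ZMod n)ˣ →* Equiv.Perm {a : ZMod n // a ≠ 0})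
    (hρ : ∀ (u : (ZMod n)ˣ) (a : {a : ZMod n // a ≠ 0}),
      ((ρ u a : {a : ZMod n // a ≠ 0}) : ZMod n) = (u : ZMod n) * (a : ZMod n)) :
    IsCyclic ↥(Subgroup.centralizer (ρ.range : Set (Equiv.Perm {a : ZMod n // a ≠ 0}))) ↔
      n.Prime := by
  have : Fact (1 < n) := ⟨by omega⟩
  refine ⟨fun hcyc => ?_, fun hp => ?_⟩
  · by_contra hnp
    exact not_isCyclic_centralizer_range ρ hρ (fun _ => ZMod.neg_ne_self_of_odd hodd)
      (ZMod.exists_ne_zero_not_isUnit (by omega) hnp) hcyc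
  · have : Fact n.Prime := ⟨hp⟩
    exact isCyclic_centralizer_range ρ hρ
end

section
/- Let n ≥ 3 be an odd natural number. The natural action of the subgroup C on {a : ZMod n // a ≠ 0} (a subgroup of the permutation group acting by evaluation) is transitive (MulAction.IsPretransitive) if and only if n is prime. -/
/-- For odd `n ≥ 3`, the natural action on `{a : ZMod n // a ≠ 0}` of the
centralizer (in the symmetric group on the nonzero elements of `ZMod n`) of the range of
the multiplication action of `(ZMod n)ˣ` is transitive if and only if `n` is prime. -/
theorem stmt_2 (n : ℕ) (hn : 3 ≤ n) (hodd : Odd n)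
    (ρ : (ZMod n)ˣ →* Equiv.Perm {a : ZMod n // a ≠ 0})
    (hρ : ∀ (u : (ZMod n)ˣ) (a : {a : ZMod n // a ≠ 0}),
      ((ρ u a : {a : ZMod n // a ≠ 0}) : ZMod n) = (u : ZMod n) * (a : ZMod n)) :
    MulAction.IsPretransitive
      ↥(Subgroup.centralizer (ρ.range : Set (Equiv.Perm {a : ZMod n // a ≠ 0})))
      {a : ZMod n // a ≠ 0} ↔ n.Prime := by
  have hn0 : n ≠ 0 := by omega
  haveI : NeZero n := ⟨hn0⟩
  have hodd2 : n % 2 = 1 := Nat.odd_iff.mp hodd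
  constructor
  · -- transitive → prime
    intro ht
    by_contra hnp
    -- smallest prime factor p of n
    set p := n.minFac with hp
    have hpp : p.Prime := Nat.minFac_prime (by omega)
    have hpd : p ∣ n := Nat.minFac_dvd n
    have hpn : p < n := lt_of_le_of_ne (Nat.le_of_dvd (by omega) hpd)
      (fun h => hnp (h ▸ hpp))
    have hp2 : 2 ≤ p := hpp.two_le
    -- p is odd
    have hpodd : p % 2 = 1 := by
      rcases Nat.even_or_odd p with he | ho
      · exfalso
        have h2n : (2 : ℕ) ∣ n := dvd_trans he.two_dvd hpd
        omega
      · exact Nat.odd_iff.mp ho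
    -- coprimality of 1+p with n
    have hcop : Nat.Coprime (1 + p) n := by
      by_contra hg
      set g := Nat.gcd (1 + p) n with hgdef
      have hg1 : g ≠ 1 := hg
      have hg0 : g ≠ 0 := by
        intro h0
        have := Nat.eq_zero_of_gcd_eq_zero_right h0
        omega
      set q := g.minFac with hq
      have hqp : q.Prime := Nat.minFac_prime hg1
      have hq1 : q ∣ 1 + p := dvd_trans (Nat.minFac_dvd g) (Nat.gcd_dvd_left _ _)
      have hq2 : q ∣ n := dvd_trans (Nat.minFac_dvd g) (Nat.gcd_dvd_right _ _)
      have hqge : p ≤ q := Nat.minFac_le_of_dvd hqp.two_le hq2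
      have hqodd : q % 2 = 1 := by
        rcases Nat.even_or_odd q with he | ho
        · exfalso
          have h2n : (2 : ℕ) ∣ n := dvd_trans he.two_dvd hq2
          omega
        · exact Nat.odd_iff.mp ho
      have hqle : q ≤ 1 + p := Nat.le_of_dvd (by omega) hq1
      -- q = p or q = p + 1; both impossible
      have hcase : q = p := by omega
      rw [hcase] at hq1
      have hd1 : p ∣ 1 := (Nat.dvd_add_right (dvd_refl p)).mp (by rwa [Nat.add_comm] at hq1)
      have := Nat.le_of_dvd one_pos hd1
      omega
    set u := ZMod.unitOfCoprime (1 + p) hcop with hu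
    have huval : (u : ZMod n) = ((1 + p : ℕ) : ZMod n) := rfl
    -- b := n / p, nonzero mod n, fixed by u
    have hdiv0 : 0 < n / p := Nat.div_pos (Nat.le_of_dvd (by omega) hpd) (by omega)
    have hdivlt : n / p < n := Nat.div_lt_self (by omega) (by omega)
    have hb : ((n / p : ℕ) : ZMod n) ≠ 0 := by
      intro h
      have hdd := (ZMod.natCast_eq_zero_iff _ n).mp h
      have := Nat.le_of_dvd hdiv0 hdd
      omega
    have h1 : ((1 : ZMod n)) ≠ 0 := by
      intro h
      have hd := (ZMod.natCast_eq_zero_iff 1 n).mp (by exact_mod_cast h)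
      have := Nat.le_of_dvd one_pos hd
      omega
    have hfix : (u : ZMod n) * ((n / p : ℕ) : ZMod n) = ((n / p : ℕ) : ZMod n) := by
      rw [huval, ← Nat.cast_mul]
      have : (1 + p) * (n / p) = n / p + n := by
        rw [Nat.add_mul, Nat.one_mul, Nat.mul_div_cancel' hpd]
      rw [this, Nat.cast_add, ZMod.natCast_self, add_zero]
    -- use transitivity
    obtain ⟨σ, hσ⟩ := ht.exists_smul_eq (⟨1, h1⟩ : {a : ZMod n // a ≠ 0})
      ⟨((n / p : ℕ) : ZMod n), hb⟩
    have hcomm : ρ u * (σ : Equiv.Perm {a : ZMod n // a ≠ 0})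
        = (σ : Equiv.Perm {a : ZMod n // a ≠ 0}) * ρ u :=
      (Subgroup.mem_centralizer_iff.mp σ.2) (ρ u) ⟨u, rfl⟩
    have hsmul : (σ : Equiv.Perm {a : ZMod n // a ≠ 0}) ⟨1, h1⟩
        = ⟨((n / p : ℕ) : ZMod n), hb⟩ := hσ
    have key : (σ : Equiv.Perm {a : ZMod n // a ≠ 0}) (ρ u ⟨1, h1⟩)
        = (σ : Equiv.Perm {a : ZMod n // a ≠ 0}) ⟨1, h1⟩ := by
      have := congrArg (fun f => f (⟨1, h1⟩ : {a : ZMod n // a ≠ 0})) hcomm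
      simp only [Equiv.Perm.mul_apply] at this
      rw [← this, hsmul]
      ext
      rw [hρ]
      exact hfix
    have heq : ρ u ⟨1, h1⟩ = (⟨1, h1⟩ : {a : ZMod n // a ≠ 0}) :=
      (σ : Equiv.Perm {a : ZMod n // a ≠ 0}).injective key
    have : (u : ZMod n) = 1 := by
      have h2 := Subtype.ext_iff.mp heq
      rw [hρ] at h2
      simpa using h2
    rw [huval] at this
    have hpz : ((p : ℕ) : ZMod n) = 0 := by
      have : ((1 : ℕ) : ZMod n) + ((p : ℕ) : ZMod n) = 1 := by
        rw [← Nat.cast_add]; exact this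
      simpa using this
    have := (ZMod.natCast_eq_zero_iff p n).mp hpz
    have := Nat.le_of_dvd (by omega) this
    omega
  · -- prime → transitive
    intro hp
    haveI := Fact.mk hp
    constructor
    intro a b
    have ha : IsUnit (a : ZMod n) := Ne.isUnit a.2
    have hbu : IsUnit (b : ZMod n) := Ne.isUnit b.2
    obtain ⟨ua, hua⟩ := ha
    obtain ⟨ub, hub⟩ := hbu
    refine ⟨⟨ρ (ub * ua⁻¹), ?_⟩, ?_⟩
    · rw [Subgroup.mem_centralizer_iff]
      rintro g ⟨v, rfl⟩
      rw [← map_mul, ← map_mul, mul_comm]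
    · show ρ (ub * ua⁻¹) a = b
      ext
      rw [hρ]
      have := ua.mul_inv
      calc ((ub * ua⁻¹ : (ZMod n)ˣ) : ZMod n) * (a : ZMod n)
          = (ub : ZMod n) * ((ua⁻¹ : (ZMod n)ˣ) * (ua : ZMod n)) := by
            rw [← hua]; push_cast; ring
        _ = (b : ZMod n) := by
            rw [← Units.val_mul, inv_mul_cancel, Units.val_one, mul_one, hub]
end

section
/- Let α be a finite type and σ : Equiv.Perm α. If the centralizer subgroup Subgroup.centralizer {σ} of Equiv.Perm α acts transitively on α, then all orbits of the cyclic subgroup generated by σ have the same cardinality: for all x y : α, Nat.card (MulAction.orbit (Subgroup.zpowers σ) x) = Nat.card (MulAction.orbit (Subgroup.zpowers σ) y). -/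
/-- If the centralizer of a permutation `σ` of a finite type `α` acts
transitively on `α`, then all orbits of the cyclic subgroup generated by `σ` (i.e. the
cycles of `σ`) have the same cardinality. -/
theorem stmt_3 {α : Type*} [Finite α] (σ : Equiv.Perm α)
    (h : MulAction.IsPretransitive ↥(Subgroup.centralizer ({σ} : Set (Equiv.Perm α))) α) :
    ∀ x y : α,
      Nat.card ↥(MulAction.orbit ↥(Subgroup.zpowers σ) x) =
        Nat.card ↥(MulAction.orbit ↥(Subgroup.zpowers σ) y) := by
  intro x y
  obtain ⟨τ, hτ⟩ := h.exists_smul_eq x y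
  have hτ' : (τ : Equiv.Perm α) x = y := hτ
  have hcomm : ∀ n : ℤ, (τ : Equiv.Perm α) * σ ^ n = σ ^ n * (τ : Equiv.Perm α) := by
    intro n
    have := Subgroup.mem_centralizer_singleton_iff.mp τ.2
    exact Commute.zpow_right this n
  have himg : (τ : Equiv.Perm α) '' MulAction.orbit (Subgroup.zpowers σ) x
      = MulAction.orbit (Subgroup.zpowers σ) y := by
    ext z
    simp only [Set.mem_image, MulAction.mem_orbit_iff]
    constructor
    · rintro ⟨w, ⟨⟨g, ⟨n, rfl⟩⟩, rfl⟩, rfl⟩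
      refine ⟨⟨σ ^ n, ⟨n, rfl⟩⟩, ?_⟩
      have : (τ : Equiv.Perm α) ((σ ^ n) x) = (σ ^ n) ((τ : Equiv.Perm α) x) := by
        have := congrArg (fun f : Equiv.Perm α => f x) (hcomm n)
        simpa using this
      simpa [hτ', Subgroup.smul_def, Equiv.Perm.smul_def] using this.symm
    · rintro ⟨⟨g, ⟨n, rfl⟩⟩, rfl⟩
      refine ⟨(σ ^ n) x, ⟨⟨σ ^ n, ⟨n, rfl⟩⟩, rfl⟩, ?_⟩
      have : (τ : Equiv.Perm α) ((σ ^ n) x) = (σ ^ n) ((τ : Equiv.Perm α) x) := by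
        have := congrArg (fun f : Equiv.Perm α => f x) (hcomm n)
        simpa using this
      simpa [hτ', Subgroup.smul_def, Equiv.Perm.smul_def] using this
  calc Nat.card ↥(MulAction.orbit ↥(Subgroup.zpowers σ) x)
      = Nat.card ↥((τ : Equiv.Perm α) '' MulAction.orbit (Subgroup.zpowers σ) x) :=
        (Nat.card_image_of_injective (τ : Equiv.Perm α).injective _).symm
    _ = Nat.card ↥(MulAction.orbit ↥(Subgroup.zpowers σ) y) := by rw [himg]
end

section
/- For every natural number n > 0 and every a : ZMod n, the orbit of a under the multiplication action of the unit group (ZMod n)ˣ on ZMod n has cardinality equal to Euler's totient of the additive order of a: Nat.card (MulAction.orbit (ZMod n)ˣ a) = Nat.totient (addOrderOf a). -/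
/-- For `n > 0` and `a : ZMod n`, the orbit of `a` under the multiplication
action of the unit group `(ZMod n)ˣ` has cardinality `φ(addOrderOf a)`. -/
theorem stmt_4 (n : ℕ) (hn : 0 < n) (a : ZMod n) :
    Nat.card ↥(MulAction.orbit (ZMod n)ˣ a) = Nat.totient (addOrderOf a) := by
  haveI : NeZero n := ⟨hn.ne'⟩
  set d := addOrderOf a with hd
  have hdpos : 0 < d := addOrderOf_pos a
  haveI : NeZero d := ⟨hdpos.ne'⟩
  have hdvd : d ∣ n := by
    have := addOrderOf_dvd_card (x := a)
    rwa [ZMod.card] at this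
  -- the additive hom `ZMod d →+ ZMod n`, sending `k` to `k • a`
  have hda : (d : ℤ) • a = 0 := by
    simpa using addOrderOf_nsmul_eq_zero a
  set φ : ZMod d →+ ZMod n := ZMod.lift d ⟨zmultiplesHom (ZMod n) a, hda⟩ with hφ
  have hφ_int : ∀ k : ℤ, φ ((k : ZMod d)) = (k : ZMod n) * a := by
    intro k
    rw [hφ, ZMod.lift_coe]
    simp [zsmul_eq_mul]
  have hφ_cast : ∀ x : ZMod n, φ (ZMod.castHom hdvd (ZMod d) x) = x * a := by
    intro x
    obtain ⟨k, rfl⟩ := ZMod.intCast_surjective x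
    rw [map_intCast, hφ_int]
  have hφ_inj : Function.Injective φ := by
    rw [injective_iff_map_eq_zero]
    intro x hx
    obtain ⟨k, rfl⟩ := ZMod.intCast_surjective x
    rw [hφ_int, ← zsmul_eq_mul] at hx
    rw [ZMod.intCast_zmod_eq_zero_iff_dvd]
    exact_mod_cast (addOrderOf_dvd_iff_zsmul_eq_zero).2 hx
  -- the orbit is the image of the units of `ZMod d` under `φ`
  have horb : MulAction.orbit (ZMod n)ˣ a
      = Set.range (fun v : (ZMod d)ˣ => φ (v : ZMod d)) := by
    ext b
    constructor
    · rintro ⟨u, rfl⟩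
      refine ⟨ZMod.unitsMap hdvd u, ?_⟩
      simp only [ZMod.unitsMap, Units.coe_map, MonoidHom.coe_coe]
      rw [hφ_cast]
      rfl
    · rintro ⟨v, rfl⟩
      obtain ⟨u, rfl⟩ := ZMod.unitsMap_surjective hdvd v
      refine ⟨u, ?_⟩
      simp only [ZMod.unitsMap, Units.coe_map, MonoidHom.coe_coe]
      rw [hφ_cast]
      rfl
  rw [horb, Nat.card_range_of_injective (fun x y hxy => Units.ext (hφ_inj hxy)),
    Nat.card_eq_fintype_card, ZMod.card_units_eq_totient]
end

section
/- Let α be a finite type with decidable equality and G a subgroup of Equiv.Perm α. The ℂ-subalgebra of Matrix α α ℂ generated by the permutation matrices P_g of all elements g ∈ G together with all diagonal matrices equals the full matrix algebra Matrix α α ℂ if and only if G acts transitively on α. -/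
open Matrix

/-- Matrices vanishing off the `G`-orbit blocks. -/
def blockSub {α : Type*} [Fintype α] [DecidableEq α] (G : Subgroup (Equiv.Perm α)) :
    Subalgebra ℂ (Matrix α α ℂ) where
  carrier := {M | ∀ i j, (∀ g ∈ G, g j ≠ i) → M i j = 0}
  mul_mem' := by
    intro M N hM hN i j h
    show (M * N) i j = 0
    rw [Matrix.mul_apply]
    refine Finset.sum_eq_zero fun k _ => ?_
    by_cases hk : ∀ g ∈ G, g k ≠ i
    · rw [hM i k hk, zero_mul]
    · push_neg at hk
      obtain ⟨g, hg, hgk⟩ := hk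
      have : N k j = 0 := by
        refine hN k j fun h' hh' hh => ?_
        exact h (g * h') (mul_mem hg hh') (by simp [Equiv.Perm.mul_apply, hh, hgk])
      rw [this, mul_zero]
  one_mem' := by
    intro i j h
    have := h 1 (one_mem G)
    simp only [Equiv.Perm.coe_one, id_eq] at this
    exact Matrix.one_apply_ne' this
  add_mem' := by
    intro M N hM hN i j h
    show M i j + N i j = 0
    rw [hM i j h, hN i j h, add_zero]
  zero_mem' := by intro i j h; rfl
  algebraMap_mem' := by
    intro c i j h
    have hij : i ≠ j := fun he => h 1 (one_mem G) (by simp [he])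
    rw [Matrix.algebraMap_matrix_apply, if_neg hij]

/-- For a finite type `α` and a subgroup `G` of `Equiv.Perm α`, the
`ℂ`-subalgebra of `Matrix α α ℂ` generated by the permutation matrices of the elements of
`G` together with all diagonal matrices is the full matrix algebra if and only if `G` acts
transitively on `α`. -/
theorem stmt_10 {α : Type*} [Fintype α] [DecidableEq α] (G : Subgroup (Equiv.Perm α)) :
    Algebra.adjoin ℂ
        ({M : Matrix α α ℂ | ∃ g ∈ G, ∀ i j, M i j = if g j = i then 1 else 0} ∪
          Set.range (Matrix.diagonal : (α → ℂ) → Matrix α α ℂ)) = ⊤ ↔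
      MulAction.IsPretransitive ↥G α := by
  constructor
  · intro h
    constructor
    intro x y
    by_contra hc
    push_neg at hc
    have hle : Algebra.adjoin ℂ
        ({M : Matrix α α ℂ | ∃ g ∈ G, ∀ i j, M i j = if g j = i then 1 else 0} ∪
          Set.range (Matrix.diagonal : (α → ℂ) → Matrix α α ℂ)) ≤ blockSub G := by
      apply Algebra.adjoin_le
      rintro M (⟨g, hg, hMg⟩ | ⟨d, rfl⟩)
      · intro i j hij
        rw [hMg i j, if_neg (hij g hg)]
      · intro i j hij
        have hij' : i ≠ j := by
          intro he
          exact hij 1 (one_mem G) (by simp [he])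
        exact Matrix.diagonal_apply_ne d hij'
    have hmem : Matrix.single y x (1 : ℂ) ∈ blockSub G := by
      apply hle
      rw [h]; trivial
    have := hmem y x fun g hg hgx => hc ⟨g, hg⟩ hgx
    simp [Matrix.single] at this
  · intro h
    rw [eq_top_iff]
    intro M _
    rw [Matrix.matrix_eq_sum_single M]
    apply Subalgebra.sum_mem
    intro i _
    apply Subalgebra.sum_mem
    intro j _
    have hone : Matrix.single i j (1 : ℂ) ∈ Algebra.adjoin ℂ
        ({M : Matrix α α ℂ | ∃ g ∈ G, ∀ i j, M i j = if g j = i then 1 else 0} ∪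
          Set.range (Matrix.diagonal : (α → ℂ) → Matrix α α ℂ)) := by
      obtain ⟨g, hg⟩ := h.exists_smul_eq j i
      have hP : (Matrix.of fun i j => if (g : Equiv.Perm α) j = i then (1:ℂ) else 0) ∈
          Algebra.adjoin ℂ
          ({M : Matrix α α ℂ | ∃ g ∈ G, ∀ i j, M i j = if g j = i then 1 else 0} ∪
            Set.range (Matrix.diagonal : (α → ℂ) → Matrix α α ℂ)) :=
        Algebra.subset_adjoin (Or.inl ⟨g, g.2, fun _ _ => rfl⟩)
      have hD : (Matrix.diagonal (Pi.single j (1:ℂ))) ∈ Algebra.adjoin ℂ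
          ({M : Matrix α α ℂ | ∃ g ∈ G, ∀ i j, M i j = if g j = i then 1 else 0} ∪
            Set.range (Matrix.diagonal : (α → ℂ) → Matrix α α ℂ)) :=
        Algebra.subset_adjoin (Or.inr ⟨_, rfl⟩)
      have key : (Matrix.of fun i j => if (g : Equiv.Perm α) j = i then (1:ℂ) else 0) *
          Matrix.diagonal (Pi.single j (1:ℂ)) = Matrix.single i j (1 : ℂ) := by
        ext a b
        rw [Matrix.mul_diagonal]
        by_cases hb : b = j
        · subst hb
          simp only [Pi.single_eq_same, mul_one, Matrix.of_apply]
          have hgj : (g : Equiv.Perm α) b = i := hg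
          rw [hgj]
          by_cases ha : a = i
          · subst ha; simp [Matrix.single]
          · simp [Matrix.single, ha, Ne.symm ha]
        · simp [Pi.single_eq_of_ne hb, Matrix.single, (Ne.symm hb : j ≠ b)]
      rw [← key]
      exact mul_mem hP hD
    have : Matrix.single i j (M i j) = (M i j) • Matrix.single i j (1:ℂ) := by
      ext a b
      simp only [Matrix.single, Matrix.smul_apply, Matrix.of_apply, smul_eq_mul]
      split_ifs <;> simp
    rw [this]
    exact Subalgebra.smul_mem _ hone _
end

section
/- Let n ≥ 3 be odd. The ℂ-subalgebra of Matrix {a : ZMod n // a ≠ 0} {a : ZMod n // a ≠ 0} ℂ generated by all diagonal matrices together with the permutation matrices of all elements of the subgroup C equals the full matrix algebra if and only if n is prime. -/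
/-- The set of matrices whose nonzero entries connect only indices with the same
invariant `c` forms a subalgebra. -/
def stmt11InvAlg {X Y : Type*} [Fintype X] [DecidableEq X] (c : X → Y) :
    Subalgebra ℂ (Matrix X X ℂ) where
  carrier := {M | ∀ i j, M i j ≠ 0 → c i = c j}
  mul_mem' := by
    intro M N hM hN i j hij
    rw [Matrix.mul_apply] at hij
    obtain ⟨k, -, hk⟩ := Finset.exists_ne_zero_of_sum_ne_zero hij
    exact (hM i k (left_ne_zero_of_mul hk)).trans (hN k j (right_ne_zero_of_mul hk))
  add_mem' := by
    intro M N hM hN i j hij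
    by_cases h1 : M i j = 0
    · exact hN i j (by simpa [Matrix.add_apply, h1] using hij)
    · exact hM i j h1
  one_mem' := by
    intro i j hij
    by_cases h : i = j
    · exact congrArg c h
    · simp [Matrix.one_apply_ne h] at hij
  zero_mem' := by intro i j hij; simp at hij
  algebraMap_mem' := by
    intro r i j hij
    by_cases h : i = j
    · exact congrArg c h
    · simp [Matrix.algebraMap_matrix_apply, h] at hij

/-- For odd `n ≥ 3`, the `ℂ`-subalgebra of matrices indexed by the nonzero
elements of `ZMod n` generated by all diagonal matrices together with the permutation
matrices of the elements of the centralizer `C` (of the multiplication action of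
`(ZMod n)ˣ`) is the full matrix algebra if and only if `n` is prime. -/
theorem stmt_11 (n : ℕ) [NeZero n] (hn : 3 ≤ n) (hodd : Odd n)
    (ρ : (ZMod n)ˣ →* Equiv.Perm {a : ZMod n // a ≠ 0})
    (hρ : ∀ (u : (ZMod n)ˣ) (a : {a : ZMod n // a ≠ 0}),
      ((ρ u a : {a : ZMod n // a ≠ 0}) : ZMod n) = (u : ZMod n) * (a : ZMod n)) :
    Algebra.adjoin ℂ
        (Set.range (Matrix.diagonal :
            ({a : ZMod n // a ≠ 0} → ℂ) → Matrix {a : ZMod n // a ≠ 0} {a : ZMod n // a ≠ 0} ℂ) ∪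
          {M : Matrix {a : ZMod n // a ≠ 0} {a : ZMod n // a ≠ 0} ℂ |
            ∃ g ∈ Subgroup.centralizer (ρ.range : Set (Equiv.Perm {a : ZMod n // a ≠ 0})),
              ∀ i j, M i j = if g j = i then 1 else 0}) = ⊤ ↔
      n.Prime := by
  haveI : Fact (1 < n) := ⟨by omega⟩
  constructor
  · -- adjoin = ⊤ → prime
    intro htop
    by_contra hnp
    -- the prime p, and m = n / p
    have hn1 : n ≠ 1 := by omega
    have hp : n.minFac.Prime := Nat.minFac_prime hn1
    set p := n.minFac with hpdef
    have hpn : p ∣ n := Nat.minFac_dvd n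
    have hpne : p ≠ n := fun h => hnp (h ▸ hp)
    set m := n / p with hmdef
    have hnpm : p * m = n := Nat.mul_div_cancel' hpn
    have hm0 : m ≠ 0 := by
      intro h; rw [h, mul_zero] at hnpm; exact (NeZero.ne n) hnpm.symm
    haveI : NeZero m := ⟨hm0⟩
    have hp2 : p ≠ 2 := by
      rintro h
      exact (Nat.not_odd_iff_even.mpr ((even_iff_two_dvd).mpr (h ▸ hpn))) hodd
    have hp3 : 3 ≤ p := by have := hp.two_le; omega
    have hφm : 0 < m.totient := Nat.totient_pos.mpr (Nat.pos_of_ne_zero hm0)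
    have htot : m.totient < n.totient := by
      by_cases hpm : p ∣ m
      · have h1 : (p * m).totient = p * m.totient :=
          Nat.totient_mul_of_prime_of_dvd hp hpm
        rw [hnpm] at h1
        rw [h1]; nlinarith
      · have hco : Nat.Coprime p m := (Nat.Prime.coprime_iff_not_dvd hp).mpr hpm
        have h1 : (p * m).totient = p.totient * m.totient := Nat.totient_mul hco
        rw [hnpm, Nat.totient_prime hp] at h1
        have h2 : 2 ≤ p - 1 := by omega
        rw [h1]; nlinarith
    -- a nontrivial unit in the kernel of reduction mod m
    have hmn : m ∣ n := ⟨p, by rw [← hnpm, mul_comm]⟩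
    have hsurj : Function.Surjective (ZMod.unitsMap hmn) := ZMod.unitsMap_surjective hmn
    have hninj : ¬ Function.Injective (ZMod.unitsMap hmn) := by
      intro hinj
      have hcard := Fintype.card_le_of_injective _ hinj
      rw [ZMod.card_units_eq_totient, ZMod.card_units_eq_totient] at hcard
      omega
    rw [Function.not_injective_iff] at hninj
    obtain ⟨a, b, hab, hne⟩ := hninj
    set w := a * b⁻¹ with hw
    have hw1 : w ≠ 1 := fun h => hne (mul_inv_eq_one.mp h)
    have hwker : ZMod.unitsMap hmn w = 1 := by
      rw [hw, map_mul, map_inv, hab, mul_inv_cancel]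
    have hcast : ZMod.castHom hmn (ZMod m) ((w : (ZMod n)ˣ) : ZMod n) = 1 := by
      have := congrArg (Units.val) hwker
      simpa [ZMod.unitsMap_def] using this
    -- w fixes p in ZMod n
    have hxp : ((w : (ZMod n)ˣ) : ZMod n) * (p : ZMod n) = (p : ZMod n) := by
      have h1 : ZMod.castHom hmn (ZMod m) (((w : (ZMod n)ˣ) : ZMod n) - 1) = 0 := by
        rw [map_sub, hcast, map_one, sub_self]
      set y := (((w : (ZMod n)ˣ) : ZMod n) - 1).val with hy
      have hyc : ((y : ℕ) : ZMod n) = ((w : (ZMod n)ˣ) : ZMod n) - 1 :=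
        ZMod.natCast_zmod_val _
      have h2 : ((y : ℕ) : ZMod m) = 0 := by
        rw [← map_natCast (ZMod.castHom hmn (ZMod m)) y, hyc, h1]
      have hmy : m ∣ y := (ZMod.natCast_eq_zero_iff y m).mp h2
      obtain ⟨c, hc⟩ := hmy
      have hnyp : n ∣ y * p := ⟨c, by rw [hc, ← hnpm]; ring⟩
      have h3 : (((w : (ZMod n)ˣ) : ZMod n) - 1) * (p : ZMod n) = 0 := by
        rw [← hyc, ← Nat.cast_mul, ZMod.natCast_eq_zero_iff]
        exact hnyp
      rw [sub_mul, one_mul, sub_eq_zero] at h3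
      exact h3
    -- the two base points
    have hpne0 : (p : ZMod n) ≠ 0 := by
      rw [Ne, ZMod.natCast_eq_zero_iff]
      intro h
      exact hpne (Nat.dvd_antisymm hpn h)
    set i0 : {a : ZMod n // a ≠ 0} := ⟨1, one_ne_zero⟩ with hi0
    set j0 : {a : ZMod n // a ≠ 0} := ⟨(p : ZMod n), hpne0⟩ with hj0
    -- the invariant
    set c : {a : ZMod n // a ≠ 0} → Set (ZMod n)ˣ :=
      fun a => {u : (ZMod n)ˣ | (u : ZMod n) * (a : ZMod n) = (a : ZMod n)} with hcdef
    have hcne : c i0 ≠ c j0 := by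
      intro h
      have hw_j0 : w ∈ c j0 := hxp
      rw [← h] at hw_j0
      have : ((w : (ZMod n)ˣ) : ZMod n) = 1 := by
        have := hw_j0
        simpa [hcdef, hi0] using this
      exact hw1 (Units.ext (by simpa using this))
    -- the invariant is preserved by ρ and by the centralizer
    have hstab : ∀ g ∈ Subgroup.centralizer
        (ρ.range : Set (Equiv.Perm {a : ZMod n // a ≠ 0})),
        ∀ x, c (g x) = c x := by
      intro g hg x
      ext u
      have hcomm : ρ u * g = g * ρ u :=
        Subgroup.mem_centralizer_iff.mp hg (ρ u) ⟨u, rfl⟩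
      have hpt : ρ u (g x) = g (ρ u x) := by
        have := congrArg (fun e : Equiv.Perm {a : ZMod n // a ≠ 0} => e x) hcomm
        simpa [Equiv.Perm.mul_apply] using this
      have key : ∀ b : {a : ZMod n // a ≠ 0},
          ((u : ZMod n) * (b : ZMod n) = (b : ZMod n)) ↔ ρ u b = b := by
        intro b
        rw [← hρ u b]
        exact (Subtype.ext_iff).symm
      simp only [hcdef, Set.mem_setOf_eq]
      rw [key (g x), key x, hpt, Equiv.apply_eq_iff_eq]
    -- the generators lie in the invariant subalgebra
    have hgen : (Set.range (Matrix.diagonal :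
            ({a : ZMod n // a ≠ 0} → ℂ) → Matrix {a : ZMod n // a ≠ 0} {a : ZMod n // a ≠ 0} ℂ) ∪
          {M : Matrix {a : ZMod n // a ≠ 0} {a : ZMod n // a ≠ 0} ℂ |
            ∃ g ∈ Subgroup.centralizer (ρ.range : Set (Equiv.Perm {a : ZMod n // a ≠ 0})),
              ∀ i j, M i j = if g j = i then 1 else 0}) ⊆ (stmt11InvAlg c : Set _) := by
      rintro M (⟨d, rfl⟩ | ⟨g, hg, hM⟩)
      · intro i j hij
        by_cases h : i = j
        · exact congrArg c h
        · simp [Matrix.diagonal_apply_ne _ h] at hij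
      · intro i j hij
        rw [hM i j] at hij
        have hgj : g j = i := by
          by_contra h
          simp [h] at hij
        rw [← hgj]
        exact hstab g hg j
    have hle := Algebra.adjoin_le (S := (stmt11InvAlg c)) hgen
    have hmem : Matrix.single i0 j0 (1 : ℂ) ∈ stmt11InvAlg c := by
      apply hle
      rw [htop]
      trivial
    exact hcne (hmem i0 j0 (by rw [Matrix.single_apply_same]; exact one_ne_zero))
  · -- prime → adjoin = ⊤
    intro hp
    haveI := Fact.mk hp
    rw [eq_top_iff]
    rintro M -
    rw [Matrix.matrix_eq_sum_single M]
    refine Subalgebra.sum_mem _ fun i _ => Subalgebra.sum_mem _ fun j _ => ?_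
    have hsmul : Matrix.single i j (M i j)
        = M i j • Matrix.single i j (1 : ℂ) := by
      rw [Matrix.smul_single, smul_eq_mul, mul_one]
    rw [hsmul]
    refine Subalgebra.smul_mem _ ?_ _
    -- the unit sending j to i
    set u : (ZMod n)ˣ := (Units.mk0 (i : ZMod n) i.2) * (Units.mk0 (j : ZMod n) j.2)⁻¹ with hu
    have huj : (u : ZMod n) * (j : ZMod n) = (i : ZMod n) := by
      rw [hu]
      simp only [Units.val_mul, Units.val_inv_eq_inv_val, Units.val_mk0]
      exact inv_mul_cancel_right₀ j.2 (i : ZMod n)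
    have hgj : ρ u j = i := Subtype.ext (by rw [hρ u j]; exact huj)
    have hgC : ρ u ∈ Subgroup.centralizer
        (ρ.range : Set (Equiv.Perm {a : ZMod n // a ≠ 0})) := by
      rw [Subgroup.mem_centralizer_iff]
      rintro h ⟨v, rfl⟩
      rw [← map_mul, ← map_mul, mul_comm]
    set P : Matrix {a : ZMod n // a ≠ 0} {a : ZMod n // a ≠ 0} ℂ :=
      Matrix.of (fun a b => if ρ u b = a then 1 else 0) with hP
    set D : Matrix {a : ZMod n // a ≠ 0} {a : ZMod n // a ≠ 0} ℂ :=
      Matrix.diagonal (fun k => if k = j then 1 else 0) with hD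
    have key : Matrix.single i j (1 : ℂ) = P * D := by
      ext a b
      rw [hP, hD, Matrix.mul_diagonal]
      simp only [Matrix.single, Matrix.of_apply]
      by_cases hb : b = j
      · subst hb
        by_cases ha : a = i
        · subst ha; simp [hgj]
        · simp [ha, hgj, Ne.symm ha, fun h : ρ u b = a => ha (hgj ▸ h.symm)]
      · simp [hb, fun h => hb (h : j = b).symm, Ne.symm hb]
    rw [key]
    exact mul_mem
      (Algebra.subset_adjoin (Set.mem_union_right _ ⟨ρ u, hgC, fun a b => rfl⟩))
      (Algebra.subset_adjoin (Set.mem_union_left _ ⟨fun k => if k = j then 1 else 0, rfl⟩))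
end

section
/- Let G be a group and I a type. Let Λ : G →* Equiv.Perm (I × G) send a ∈ G to the permutation (i, g) ↦ (i, a * g). Then the centralizer of Λ.range in Equiv.Perm (I × G) is isomorphic, as a group, to the semidirect product (I → G) ⋊ Equiv.Perm I, where Equiv.Perm I acts on the product group I → G by permuting coordinates (τ acts by h ↦ h ∘ τ⁻¹); this semidirect product is the unrestricted wreath product G ≀ S_I. -/
/-- The action of `Equiv.Perm I` on the (unrestricted) product group `I → G` by permuting
coordinates: `τ` acts by `h ↦ h ∘ τ⁻¹`. -/
def permuteCoords (I G : Type*) [Group G] : Equiv.Perm I →* MulAut (I → G) where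
  toFun τ :=
    { toFun := fun h => h ∘ ⇑τ⁻¹
      invFun := fun h => h ∘ ⇑τ
      left_inv := fun h => funext fun i => by simp
      right_inv := fun h => funext fun i => by simp
      map_mul' := fun h₁ h₂ => rfl }
  map_one' := rfl
  map_mul' := fun τ₁ τ₂ => rfl

/-!
A permutation `σ` of `I × G` commuting with all left multiplications `(i, g) ↦ (i, a * g)` is
determined by the images `σ (i, 1) = (τ i, f i)`, since then `σ (i, g) = (τ i, g * f i)`; `τ` is a
permutation of `I` because `σ⁻¹` has the same shape. Conversely `(h, τ) ↦ ((i, g) ↦ (τ i, g * (h (τ i))⁻¹))`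
is an injective homomorphism from `(I → G) ⋊ Perm I` into the centralizer, and the description
above shows that it is onto.
-/

namespace WreathProduct

open Equiv Subgroup

variable (I G : Type*) [Group G]

def leftMulPerm : G →* Perm (I × G) where
  toFun a := prodCongr (Equiv.refl I) (Equiv.mulLeft a)
  map_one' := Equiv.ext fun x => by simp
  map_mul' a b := Equiv.ext fun x => Prod.ext rfl (mul_assoc a b x.2)

variable {I G} in
@[simp]
theorem leftMulPerm_apply (a : G) (x : I × G) : leftMulPerm I G a x = (x.1, a * x.2) := rfl

/-- The inverse of `h` is needed for this to be multiplicative, because `g` is multiplied on the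
right. -/
def toPerm : (I → G) ⋊[permuteCoords I G] Perm I →* Perm (I × G) where
  toFun x :=
    { toFun := fun p => (x.right p.1, p.2 * (x.left (x.right p.1))⁻¹)
      invFun := fun p => (x.right⁻¹ p.1, p.2 * x.left p.1)
      left_inv := fun p => by simp
      right_inv := fun p => by simp }
  map_one' := Equiv.ext fun p => by simp
  map_mul' x y := Equiv.ext fun p => Prod.ext rfl <| by
    simp only [SemidirectProduct.mul_left, SemidirectProduct.mul_right]
    simp [permuteCoords, mul_assoc]

variable {I G}

@[simp]
theorem toPerm_apply (x : (I → G) ⋊[permuteCoords I G] Perm I) (p : I × G) :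
    toPerm I G x p = (x.right p.1, p.2 * (x.left (x.right p.1))⁻¹) := rfl

theorem toPerm_injective : Function.Injective (toPerm I G) := by
  rw [injective_iff_map_eq_one]
  intro x hx
  have hfix (i : I) : x.right i = i ∧ x.left (x.right i) = 1 := by
    simpa [Prod.ext_iff] using Equiv.ext_iff.mp hx (i, 1)
  ext i
  · simpa [(hfix i).1] using (hfix i).2
  · exact (hfix i).1

theorem toPerm_mem_centralizer (x : (I → G) ⋊[permuteCoords I G] Perm I) :
    toPerm I G x ∈ centralizer (leftMulPerm I G).range := by
  rw [mem_centralizer_iff]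
  rintro - ⟨a, rfl⟩
  ext p <;> simp [mul_assoc]

theorem apply_eq_of_mem_centralizer {σ : Perm (I × G)}
    (hσ : σ ∈ centralizer (leftMulPerm I G).range) (i : I) (g : G) :
    σ (i, g) = ((σ (i, 1)).1, g * (σ (i, 1)).2) := by
  have hcomm := congrArg (· (i, 1)) (mem_centralizer_iff.mp hσ _ ⟨g, rfl⟩)
  simpa using hcomm.symm

theorem fst_apply_eq_of_mem_centralizer {σ : Perm (I × G)}
    (hσ : σ ∈ centralizer (leftMulPerm I G).range) (i : I) (g : G) :
    (σ (i, g)).1 = (σ (i, 1)).1 := by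
  rw [apply_eq_of_mem_centralizer hσ]

/-- The permutation induced by `σ` on the orbits `{i} × G` of the left multiplications. -/
def permOfMemCentralizer {σ : Perm (I × G)} (hσ : σ ∈ centralizer (leftMulPerm I G).range) :
    Perm I where
  toFun i := (σ (i, 1)).1
  invFun j := (σ⁻¹ (j, 1)).1
  left_inv i := by
    show (σ⁻¹ ((σ (i, 1)).1, 1)).1 = i
    rw [← fst_apply_eq_of_mem_centralizer (inv_mem hσ) _ (σ (i, 1)).2]
    simp
  right_inv j := by
    show (σ ((σ⁻¹ (j, 1)).1, 1)).1 = j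
    rw [← fst_apply_eq_of_mem_centralizer hσ _ (σ⁻¹ (j, 1)).2]
    simp

theorem range_toPerm : (toPerm I G).range = centralizer (leftMulPerm I G).range := by
  refine le_antisymm ?_ fun σ hσ => ?_
  · rintro - ⟨x, rfl⟩
    exact toPerm_mem_centralizer x
  · set τ := permOfMemCentralizer hσ
    refine ⟨⟨fun j => (σ (τ.symm j, 1)).2⁻¹, τ⟩, Equiv.ext fun p => ?_⟩
    have hτ : τ p.1 = (σ (p.1, 1)).1 := rfl
    rw [apply_eq_of_mem_centralizer hσ p.1 p.2, ← hτ]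
    simp

end WreathProduct

open WreathProduct in
/-- For a group `G` and a type `I`, the centralizer in `Equiv.Perm (I × G)`
of the range of the homomorphism `Λ` sending `a : G` to the permutation
`(i, g) ↦ (i, a * g)` is isomorphic as a group to the unrestricted wreath product
`G ≀ S_I`, i.e. the semidirect product `(I → G) ⋊ Equiv.Perm I` where `Equiv.Perm I` acts
by permuting coordinates. -/
theorem stmt_12 {G : Type*} [Group G] {I : Type*}
    (Λ : G →* Equiv.Perm (I × G))
    (hΛ : ∀ (a : G) (x : I × G), Λ a x = (x.1, a * x.2)) :
    Nonempty
      (↥(Subgroup.centralizer (Λ.range : Set (Equiv.Perm (I × G)))) ≃*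
        SemidirectProduct (I → G) (Equiv.Perm I) (permuteCoords I G)) := by
  obtain rfl : Λ = leftMulPerm I G := MonoidHom.ext fun a => Equiv.ext fun x => hΛ a x
  exact ⟨((MonoidHom.ofInjective toPerm_injective).trans
    (MulEquiv.subgroupCongr range_toPerm)).symm⟩
end

section
/- Let p be an odd prime and I a type. The subgroup of Equiv.Perm (I × {a : ZMod p // a ≠ 0}) consisting of all permutations commuting with every permutation (i, a) ↦ (i, u·a) for u ∈ (ZMod p)ˣ is isomorphic, as a group, to the semidirect product (I → ZMod (p − 1)) ⋊ Equiv.Perm I, where Equiv.Perm I acts on the product group I → ZMod (p − 1) by permuting coordinates; that is, it is the unrestricted wreath product ℤ_{p−1} ≀ S_I. -/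
open Equiv

section

variable {K I : Type*} [CommGroupWithZero K]

def mulLeftNeZero (u : Kˣ) : Perm {a : K // a ≠ 0} :=
  unitsEquivNeZero.permCongr (Equiv.mulLeft u)

@[simp]
lemma coe_mulLeftNeZero_apply (u : Kˣ) (a : {a : K // a ≠ 0}) :
    (mulLeftNeZero u a : K) = u * a := by
  simp [mulLeftNeZero, Equiv.permCongr_apply]

def scalePerm : Kˣ →* Perm (I × {a : K // a ≠ 0}) where
  toFun u := prodCongr (Equiv.refl I) (mulLeftNeZero u)
  map_one' := by ext x <;> simp
  map_mul' u v := by ext x <;> simp [mul_assoc]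

@[simp]
lemma fst_scalePerm_apply (u : Kˣ) (x : I × {a : K // a ≠ 0}) : (scalePerm u x).1 = x.1 := rfl

@[simp]
lemma coe_snd_scalePerm_apply (u : Kˣ) (x : I × {a : K // a ≠ 0}) :
    ((scalePerm u x).2 : K) = u * x.2 :=
  coe_mulLeftNeZero_apply u x.2

variable (K I) in
abbrev scalingCentralizer : Subgroup (Perm (I × {a : K // a ≠ 0})) :=
  Subgroup.centralizer ((scalePerm (K := K) (I := I)).range : Set (Perm (I × {a : K // a ≠ 0})))

-- `n` is indexed by the target fibre, so that composition matches the action `h ↦ h ∘ τ⁻¹`.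
def wreathPerm :
    (I → Kˣ) ⋊[permuteCoords I Kˣ] Perm I →* Perm (I × {a : K // a ≠ 0}) where
  toFun x := prodShear x.right fun i => mulLeftNeZero (x.left (x.right i))
  map_one' := by ext x <;> simp
  map_mul' := by
    rintro ⟨n, τ⟩ ⟨m, ρ⟩
    ext z
    · rfl
    · change ((n * permuteCoords I Kˣ τ m) (τ (ρ z.1)) : K) * z.2 =
        n (τ (ρ z.1)) * (m (ρ z.1) * z.2)
      simp [permuteCoords, mul_assoc]

@[simp]
lemma fst_wreathPerm_apply (x : (I → Kˣ) ⋊[permuteCoords I Kˣ] Perm I)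
    (y : I × {a : K // a ≠ 0}) : (wreathPerm x y).1 = x.right y.1 := rfl

@[simp]
lemma coe_snd_wreathPerm_apply (x : (I → Kˣ) ⋊[permuteCoords I Kˣ] Perm I)
    (y : I × {a : K // a ≠ 0}) : ((wreathPerm x y).2 : K) = x.left (x.right y.1) * y.2 :=
  coe_mulLeftNeZero_apply _ y.2

lemma wreathPerm_injective : Function.Injective (wreathPerm (K := K) (I := I)) := by
  rintro ⟨n, τ⟩ ⟨m, ρ⟩ h
  have hτ : τ = ρ :=
    Equiv.ext fun i => congr_arg Prod.fst (DFunLike.congr_fun h (i, ⟨1, one_ne_zero⟩))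
  subst hτ
  congr
  funext j
  exact Units.ext <| by
    simpa using
      congr_arg (fun y => (y.2 : K)) (DFunLike.congr_fun h (τ.symm j, ⟨1, one_ne_zero⟩))

lemma wreathPerm_mem_scalingCentralizer (x : (I → Kˣ) ⋊[permuteCoords I Kˣ] Perm I) :
    wreathPerm x ∈ scalingCentralizer K I := by
  rintro _ ⟨u, rfl⟩
  ext y
  · rfl
  · simp [mul_left_comm]

lemma apply_eq_scalePerm_apply_one {σ : Perm (I × {a : K // a ≠ 0})}
    (hσ : σ ∈ scalingCentralizer K I) (i : I) (a : {a : K // a ≠ 0}) :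
    σ (i, a) = scalePerm (unitsEquivNeZero.symm a) (σ (i, ⟨1, one_ne_zero⟩)) := by
  have h : (i, a) = scalePerm (unitsEquivNeZero.symm a) (i, ⟨1, one_ne_zero⟩) := by
    ext <;> simp
  rw [h, ← Perm.mul_apply, ← hσ _ ⟨_, rfl⟩, Perm.mul_apply]

lemma fst_apply_of_mem_scalingCentralizer {σ : Perm (I × {a : K // a ≠ 0})}
    (hσ : σ ∈ scalingCentralizer K I) (x : I × {a : K // a ≠ 0}) :
    (σ x).1 = (σ (x.1, ⟨1, one_ne_zero⟩)).1 := by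
  rw [apply_eq_scalePerm_apply_one hσ x.1 x.2, fst_scalePerm_apply]

lemma coe_snd_apply_of_mem_scalingCentralizer {σ : Perm (I × {a : K // a ≠ 0})}
    (hσ : σ ∈ scalingCentralizer K I) (x : I × {a : K // a ≠ 0}) :
    ((σ x).2 : K) = x.2 * (σ (x.1, ⟨1, one_ne_zero⟩)).2 := by
  rw [apply_eq_scalePerm_apply_one hσ x.1 x.2, coe_snd_scalePerm_apply]
  rfl

def basePerm (σ : Perm (I × {a : K // a ≠ 0})) (hσ : σ ∈ scalingCentralizer K I) :
    Perm I where
  toFun i := (σ (i, ⟨1, one_ne_zero⟩)).1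
  invFun i := (σ⁻¹ (i, ⟨1, one_ne_zero⟩)).1
  left_inv i := by
    change (σ⁻¹ ((σ (i, _)).1, _)).1 = i
    rw [← fst_apply_of_mem_scalingCentralizer (inv_mem hσ), Perm.inv_def, symm_apply_apply]
  right_inv i := by
    change (σ ((σ⁻¹ (i, _)).1, _)).1 = i
    rw [← fst_apply_of_mem_scalingCentralizer hσ, Perm.inv_def, apply_symm_apply]

lemma scalingCentralizer_le_range_wreathPerm :
    scalingCentralizer K I ≤ (wreathPerm (K := K) (I := I)).range := by
  intro σ hσ
  let τ := basePerm σ hσ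
  refine ⟨⟨fun j => unitsEquivNeZero.symm (σ (τ.symm j, ⟨1, one_ne_zero⟩)).2, τ⟩, ?_⟩
  ext x
  · exact (fst_apply_of_mem_scalingCentralizer hσ x).symm
  · simp [coe_snd_apply_of_mem_scalingCentralizer hσ x, mul_comm]

lemma range_wreathPerm :
    (wreathPerm (K := K) (I := I)).range = scalingCentralizer K I :=
  le_antisymm (by rintro _ ⟨x, rfl⟩; exact wreathPerm_mem_scalingCentralizer x)
    scalingCentralizer_le_range_wreathPerm

noncomputable def scalingCentralizerEquiv :
    scalingCentralizer K I ≃* (I → Kˣ) ⋊[permuteCoords I Kˣ] Perm I :=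
  ((MonoidHom.ofInjective wreathPerm_injective).trans
    (MulEquiv.subgroupCongr range_wreathPerm)).symm

end

noncomputable def ZMod.unitsMulEquiv (p : ℕ) [Fact p.Prime] :
    (ZMod p)ˣ ≃* Multiplicative (ZMod (p - 1)) :=
  mulEquivOfCyclicCardEq <| by
    rw [Nat.card_eq_fintype_card, ZMod.card_units]
    exact (Nat.card_zmod _).symm

theorem stmt_13_general (p : ℕ) [Fact p.Prime] {I : Type*}
    (Λ : (ZMod p)ˣ →* Equiv.Perm (I × {a : ZMod p // a ≠ 0}))
    (hΛ : ∀ (u : (ZMod p)ˣ) (x : I × {a : ZMod p // a ≠ 0}),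
      (Λ u x).1 = x.1 ∧ ((Λ u x).2 : ZMod p) = (u : ZMod p) * (x.2 : ZMod p)) :
    Nonempty
      (↥(Subgroup.centralizer
          (Λ.range : Set (Equiv.Perm (I × {a : ZMod p // a ≠ 0})))) ≃*
        SemidirectProduct (I → Multiplicative (ZMod (p - 1))) (Equiv.Perm I)
          (permuteCoords I (Multiplicative (ZMod (p - 1))))) := by
  obtain rfl : Λ = scalePerm :=
    MonoidHom.ext fun u => Equiv.ext fun x => Prod.ext (hΛ u x).1 (Subtype.ext (hΛ u x).2)
  exact ⟨scalingCentralizerEquiv.trans <|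
    SemidirectProduct.congr (MulEquiv.piCongrRight fun _ => ZMod.unitsMulEquiv p)
      (MulEquiv.refl _) fun _ => rfl⟩

/-- For an odd prime `p` and a type `I`, the subgroup of
`Equiv.Perm (I × {a : ZMod p // a ≠ 0})` of permutations commuting with every permutation
`(i, a) ↦ (i, u·a)` (for `u : (ZMod p)ˣ`) is isomorphic as a group to the unrestricted
wreath product `ℤ_{p-1} ≀ S_I`, i.e. the semidirect product
`(I → ZMod (p-1)) ⋊ Equiv.Perm I` with `Equiv.Perm I` permuting coordinates. -/
theorem stmt_13 (p : ℕ) [Fact p.Prime] (hodd : Odd p) {I : Type*}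
    (Λ : (ZMod p)ˣ →* Equiv.Perm (I × {a : ZMod p // a ≠ 0}))
    (hΛ : ∀ (u : (ZMod p)ˣ) (x : I × {a : ZMod p // a ≠ 0}),
      (Λ u x).1 = x.1 ∧ ((Λ u x).2 : ZMod p) = (u : ZMod p) * (x.2 : ZMod p)) :
    Nonempty
      (↥(Subgroup.centralizer
          (Λ.range : Set (Equiv.Perm (I × {a : ZMod p // a ≠ 0})))) ≃*
        SemidirectProduct (I → Multiplicative (ZMod (p - 1))) (Equiv.Perm I)
          (permuteCoords I (Multiplicative (ZMod (p - 1))))) :=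
  stmt_13_general p Λ hΛ
end

section
/- Let I be a type and V a nonempty type, and let L be the inclusion-ordered family consisting of ∅ together with all cylinders Cyl(s,g). Then L is closed under arbitrary intersections, hence is a complete lattice with infimum given by set intersection; its atoms are exactly the singletons {f} for f : I → V; and L is atomistic: every element of L is the supremum in L of the set of atoms below it. -/
/-- The cylinder on `s : Set I` determined by `g : I → V`: the set of functions agreeing
with `g` on `s`. -/
def Cyl {I V : Type*} (s : Set I) (g : I → V) : Set (I → V) := {f | ∀ i ∈ s, f i = g i}

/-- The family `L`: the empty set together with all cylinders, ordered by inclusion.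
This is the concrete model of the critical multi-cubic lattice (with `0 = ∅` adjoined). -/
def CMCL (I V : Type*) : Set (Set (I → V)) :=
  insert ∅ {c | ∃ (s : Set I) (g : I → V), c = Cyl s g}

lemma singleton_mem_CMCL {I V : Type*} (f : I → V) : {f} ∈ CMCL I V := by
  right
  exact ⟨Set.univ, f, by ext h; simp [Cyl, funext_iff]⟩

lemma singleton_atom {I V : Type*} (f : I → V) :
    ({f} : Set (I → V)) ≠ ∅ ∧ ∀ b ∈ CMCL I V, b ⊂ {f} → b = ∅ := by
  refine ⟨Set.singleton_ne_empty f, fun b _ hb => ?_⟩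
  rcases Set.subset_singleton_iff_eq.mp hb.subset with h | h
  · exact h
  · exact absurd h hb.ne

/-- For a nonempty `V`, the family `L = CMCL I V` is closed under arbitrary
intersections (hence is a complete lattice with infimum given by set intersection); its
atoms are exactly the singletons `{f}`; and it is atomistic: every element of `L` is the
supremum (here: union) of the set of atoms below it. -/
theorem stmt_14 (I V : Type*) [Nonempty V] :
    (∀ T : Set (Set (I → V)), T ⊆ CMCL I V → ⋂₀ T ∈ CMCL I V) ∧
    (∀ c ∈ CMCL I V,
      ((c ≠ ∅ ∧ ∀ b ∈ CMCL I V, b ⊂ c → b = ∅) ↔ ∃ f : I → V, c = {f})) ∧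
    (∀ c ∈ CMCL I V,
      c = ⋃₀ {a | a ∈ CMCL I V ∧ (a ≠ ∅ ∧ ∀ b ∈ CMCL I V, b ⊂ a → b = ∅) ∧ a ⊆ c}) := by
  refine ⟨?_, ?_, ?_⟩
  · intro T hT
    by_cases hC : ⋂₀ T = ∅
    · rw [hC]; exact Set.mem_insert _ _
    · obtain ⟨f₀, hf₀⟩ := Set.nonempty_iff_ne_empty.mpr hC
      right
      refine ⟨{i | ∀ f ∈ ⋂₀ T, f i = f₀ i}, f₀, ?_⟩
      ext f
      constructor
      · intro hf i hi
        exact hi f hf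
      · intro hf t ht
        rcases hT ht with h | ⟨s, g, rfl⟩
        · exact absurd (hf₀ t ht) (by subst h; simp)
        · intro i his
          have hS : i ∈ {i | ∀ f ∈ ⋂₀ T, f i = f₀ i} := by
            intro h hh
            exact (hh _ ht i his).trans (hf₀ _ ht i his).symm
          exact (hf i hS).trans (hf₀ _ ht i his)
  · intro c hc
    constructor
    · rintro ⟨hne, hmin⟩
      rcases hc with h | ⟨s, g, rfl⟩
      · exact absurd h hne
      · refine ⟨g, ?_⟩
        have hg : ({g} : Set (I → V)) ⊆ Cyl s g :=
          Set.singleton_subset_iff.mpr (fun i _ => rfl)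
        rcases hg.ssubset_or_eq with h | h
        · exact absurd (hmin _ (singleton_mem_CMCL g) h) (Set.singleton_ne_empty g)
        · exact h.symm
    · rintro ⟨f, rfl⟩
      exact singleton_atom f
  · intro c hc
    ext f
    simp only [Set.mem_sUnion, Set.mem_setOf_eq]
    constructor
    · intro hf
      exact ⟨{f}, ⟨singleton_mem_CMCL f, singleton_atom f, Set.singleton_subset_iff.mpr hf⟩, rfl⟩
    · rintro ⟨a, ⟨_, _, ha⟩, hfa⟩
      exact ha hfa
end

section
/- Let I be a nonempty type and V a type with at least two elements, and let L be the inclusion-ordered complete lattice consisting of ∅ together with all cylinders Cyl(s,g). Then the coatoms of L are exactly the one-coordinate cylinders Cyl({i}, g) for i : I and g : I → V, and L is coatomistic: every element of L is the infimum (intersection) of the set of coatoms above it. -/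
lemma self_mem_Cyl {I V : Type*} (s : Set I) (g : I → V) : g ∈ Cyl s g := fun _ _ => rfl

lemma Cyl_empty {I V : Type*} (g : I → V) : Cyl (∅ : Set I) g = Set.univ := by
  ext f; simp [Cyl]

lemma Cyl_ne_univ {I V : Type*} [Nontrivial V] {s : Set I} (hs : s.Nonempty) (g : I → V) :
    Cyl s g ≠ Set.univ := by
  obtain ⟨i, hi⟩ := hs
  obtain ⟨v, hv⟩ := exists_ne (g i)
  classical
  intro h
  have hmem : Function.update g i v ∈ Cyl s g := h ▸ Set.mem_univ _
  have := hmem i hi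
  simp [Function.update_self] at this
  exact hv this

lemma coatom_Cyl_single {I V : Type*} [Nontrivial V] (i : I) (g : I → V) :
    ∀ b ∈ CMCL I V, Cyl {i} g ⊂ b → b = Set.univ := by
  rintro b hb ⟨hsub, hne⟩
  rcases hb with rfl | ⟨s, h, rfl⟩
  · exact absurd (hsub (self_mem_Cyl _ g)) (Set.notMem_empty g)
  have hs : s = ∅ := by
    by_contra hs
    obtain ⟨j, hj⟩ := Set.nonempty_iff_ne_empty.2 hs
    by_cases hji : j = i
    · have hgj : g j = h j := hsub (self_mem_Cyl _ g) j hj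
      apply hne
      intro f hf k hk
      simp only [Set.mem_singleton_iff] at hk
      rw [hk, ← hji, hf j hj, ← hgj]
    · classical
      obtain ⟨v, hv⟩ := exists_ne (h j)
      have hmem : Function.update g j v ∈ Cyl {i} g := by
        intro k hk
        simp only [Set.mem_singleton_iff] at hk; subst hk
        rw [Function.update_of_ne (fun hh => hji hh.symm)]
      have := hsub hmem j hj
      simp [Function.update_self] at this
      exact hv this
  subst hs
  exact Cyl_empty h

/-- For nonempty `I` and `V` with at least two elements, the coatoms of
`L = CMCL I V` are exactly the one-coordinate cylinders `Cyl {i} g`, and `L` is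
coatomistic: every element of `L` is the intersection of the set of coatoms above it. -/
theorem stmt_15 (I V : Type*) [Nonempty I] [Nontrivial V] :
    (∀ c ∈ CMCL I V,
      ((c ≠ Set.univ ∧ ∀ b ∈ CMCL I V, c ⊂ b → b = Set.univ) ↔
        ∃ (i : I) (g : I → V), c = Cyl {i} g)) ∧
    (∀ c ∈ CMCL I V,
      c = ⋂₀ {b | b ∈ CMCL I V ∧
        (b ≠ Set.univ ∧ ∀ b' ∈ CMCL I V, b ⊂ b' → b' = Set.univ) ∧ c ⊆ b}) := by
  constructor
  · rintro c hc
    constructor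
    · rintro ⟨hne, hcoatom⟩
      rcases hc with rfl | ⟨s, g, rfl⟩
      · -- ∅ is not a coatom
        exfalso
        obtain ⟨i⟩ := ‹Nonempty I›
        obtain ⟨a, b, hab⟩ := exists_pair_ne V
        have h1 : Cyl {i} (fun _ => a) ∈ CMCL I V := Or.inr ⟨{i}, _, rfl⟩
        have h2 : (∅ : Set (I → V)) ⊂ Cyl {i} (fun _ => a) :=
          Set.empty_ssubset.2 ⟨_, self_mem_Cyl _ _⟩
        exact Cyl_ne_univ (Set.singleton_nonempty i) (fun _ => a) (hcoatom _ h1 h2)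
      · have hs : s.Nonempty := by
          rcases s.eq_empty_or_nonempty with rfl | h
          · exact absurd (Cyl_empty g) hne
          · exact h
        obtain ⟨i, hi⟩ := hs
        refine ⟨i, g, ?_⟩
        have hsub : Cyl s g ⊆ Cyl {i} g := by
          intro f hf k hk
          simp only [Set.mem_singleton_iff] at hk
          exact hk ▸ hf i hi
        rcases eq_or_ne (Cyl s g) (Cyl {i} g) with h | h
        · exact h
        · exact absurd (hcoatom _ (Or.inr ⟨{i}, g, rfl⟩) ⟨hsub, fun hh => h (hsub.antisymm hh)⟩)
            (Cyl_ne_univ (Set.singleton_nonempty i) g)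
    · rintro ⟨i, g, rfl⟩
      exact ⟨Cyl_ne_univ (Set.singleton_nonempty i) g, coatom_Cyl_single i g⟩
  · rintro c hc
    rcases hc with rfl | ⟨s, g, rfl⟩
    · apply subset_antisymm (Set.empty_subset _)
      intro f hf
      exfalso
      obtain ⟨i⟩ := ‹Nonempty I›
      obtain ⟨a, b, hab⟩ := exists_pair_ne V
      have ha : f ∈ Cyl {i} (fun _ => a) :=
        hf _ ⟨Or.inr ⟨{i}, _, rfl⟩, ⟨Cyl_ne_univ (Set.singleton_nonempty i) _, coatom_Cyl_single i _⟩,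
          Set.empty_subset _⟩
      have hb : f ∈ Cyl {i} (fun _ => b) :=
        hf _ ⟨Or.inr ⟨{i}, _, rfl⟩, ⟨Cyl_ne_univ (Set.singleton_nonempty i) _, coatom_Cyl_single i _⟩,
          Set.empty_subset _⟩
      exact hab ((ha i rfl).symm.trans (hb i rfl))
    · apply subset_antisymm
      · intro f hf b hb
        exact hb.2.2 hf
      · intro f hf i hi
        have hsub : Cyl s g ⊆ Cyl {i} g := by
          intro f' hf' k hk
          simp only [Set.mem_singleton_iff] at hk
          exact hk ▸ hf' i hi
        have : f ∈ Cyl {i} g :=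
          hf _ ⟨Or.inr ⟨{i}, g, rfl⟩, ⟨Cyl_ne_univ (Set.singleton_nonempty i) g, coatom_Cyl_single i g⟩, hsub⟩
        exact this i rfl
end

section
/- In the model M of the critical multi-cubic lattice, the operation Δ satisfies: (1) Δ(p,p) = p for all p; (2) if p ≤ q then Δ(q,p) ≤ q; (3) if p ≤ q then Δ(q, Δ(q,p)) = p; (4) if p ≤ q ≤ r then Δ(r,p) ≤ Δ(r,q); (5) if p ≤ q then Δ(q,p) = q if and only if p = q. -/
/-- The order on the model `I → Option V` of the critical multi-cubic lattice:
`p ≤ q` iff at every index `q` is the indeterminate `X` (= `none`) or agrees with `p`. -/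
def MCLle {I V : Type*} (p q : I → Option V) : Prop := ∀ i, q i = none ∨ q i = p i

/-- The paper's operation `Δ(q, p)` on the model of the critical multi-cubic lattice over
`ZMod n`: negate the coordinate of `p` wherever `q` is indeterminate (`none`), and keep
the coordinate of `p` otherwise. -/
def MCLdelta {I : Type*} {n : ℕ} (q p : I → Option {a : ZMod n // a ≠ 0}) :
    I → Option {a : ZMod n // a ≠ 0} := fun i =>
  match q i with
  | none => (p i).map fun v => Subtype.mk (-(v.val)) (fun h => v.property (neg_eq_zero.mp h))
  | some _ => p i

/-! Everything is coordinatewise: where the first argument of `Δ` is `X`, `Δ` negates the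
coordinate, an involution of `Option V` under which only `X` is sent to `X`; elsewhere `Δ` is
the identity. -/

section MCLdelta

variable {I : Type*} {n : ℕ} {p q r : I → Option {a : ZMod n // a ≠ 0}} {i : I}

lemma MCLdelta_of_eq_none (h : q i = none) :
    MCLdelta q p i = (p i).map fun v => ⟨-v.val, fun h => v.property (neg_eq_zero.mp h)⟩ := by
  simp [MCLdelta, h]

lemma MCLdelta_of_eq_some {a : {a : ZMod n // a ≠ 0}} (h : q i = some a) :
    MCLdelta q p i = p i := by
  simp [MCLdelta, h]

lemma MCLdelta_eq_none_iff : MCLdelta q p i = none ↔ p i = none := by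
  cases h : q i with
  | none => simp [MCLdelta_of_eq_none h]
  | some a => rw [MCLdelta_of_eq_some h]

lemma MCLle.eq_some_of_eq_some {V : Type*} {p q : I → Option V} {a : V} (hpq : MCLle p q)
    (h : q i = some a) : p i = some a := by
  simpa [h, eq_comm] using hpq i

lemma MCLdelta_self (p : I → Option {a : ZMod n // a ≠ 0}) : MCLdelta p p = p := by
  funext i
  cases h : p i with
  | none => exact MCLdelta_eq_none_iff.mpr h
  | some a => exact (MCLdelta_of_eq_some h).trans h

lemma MCLle.MCLdelta_le (hpq : MCLle p q) : MCLle (MCLdelta q p) q := by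
  intro i
  cases h : q i with
  | none => exact Or.inl rfl
  | some a => exact Or.inr (by rw [MCLdelta_of_eq_some h, hpq.eq_some_of_eq_some h])

lemma MCLdelta_MCLdelta (q p : I → Option {a : ZMod n // a ≠ 0}) :
    MCLdelta q (MCLdelta q p) = p := by
  funext i
  cases h : q i with
  | none =>
    rw [MCLdelta_of_eq_none h, MCLdelta_of_eq_none h, Option.map_map]
    cases p i with
    | none => rfl
    | some v => exact congrArg some (Subtype.ext (neg_neg _))
  | some a => rw [MCLdelta_of_eq_some h, MCLdelta_of_eq_some h]

lemma MCLle.MCLdelta_mono (hpq : MCLle p q) (r : I → Option {a : ZMod n // a ≠ 0}) :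
    MCLle (MCLdelta r p) (MCLdelta r q) := by
  intro i
  cases hq : q i with
  | none => exact Or.inl (MCLdelta_eq_none_iff.mpr hq)
  | some a =>
    right
    cases h : r i with
    | none => rw [MCLdelta_of_eq_none h, MCLdelta_of_eq_none h, hq, hpq.eq_some_of_eq_some hq]
    | some b => rw [MCLdelta_of_eq_some h, MCLdelta_of_eq_some h, hq,
        hpq.eq_some_of_eq_some hq]

lemma MCLdelta_eq_self_iff : MCLdelta q p = q ↔ p = q := by
  refine ⟨fun hd => funext fun i => ?_, fun hpq => hpq ▸ MCLdelta_self p⟩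
  have hdi := congrFun hd i
  cases h : q i with
  | none => rwa [h, MCLdelta_eq_none_iff] at hdi
  | some a => rwa [MCLdelta_of_eq_some h, h] at hdi

end MCLdelta

theorem stmt_16_general (I : Type*) (k : ℕ) :
    (∀ p : I → Option {a : ZMod (2 * k + 1) // a ≠ 0}, MCLdelta p p = p) ∧
    (∀ p q : I → Option {a : ZMod (2 * k + 1) // a ≠ 0},
      MCLle p q → MCLle (MCLdelta q p) q) ∧
    (∀ p q : I → Option {a : ZMod (2 * k + 1) // a ≠ 0},
      MCLle p q → MCLdelta q (MCLdelta q p) = p) ∧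
    (∀ p q r : I → Option {a : ZMod (2 * k + 1) // a ≠ 0},
      MCLle p q → MCLle q r → MCLle (MCLdelta r p) (MCLdelta r q)) ∧
    (∀ p q : I → Option {a : ZMod (2 * k + 1) // a ≠ 0},
      MCLle p q → (MCLdelta q p = q ↔ p = q)) :=
  ⟨MCLdelta_self, fun _ _ hpq => hpq.MCLdelta_le, fun p q _ => MCLdelta_MCLdelta q p,
    fun _ _ r hpq _ => hpq.MCLdelta_mono r, fun _ _ _ => MCLdelta_eq_self_iff⟩

/-- In the model `M = I → Option {a : ZMod (2k+1) // a ≠ 0}` of the critical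
multi-cubic lattice, `Δ` satisfies: (1) `Δ(p,p) = p`; (2) if `p ≤ q` then `Δ(q,p) ≤ q`;
(3) if `p ≤ q` then `Δ(q, Δ(q,p)) = p`; (4) if `p ≤ q ≤ r` then `Δ(r,p) ≤ Δ(r,q)`;
(5) if `p ≤ q` then `Δ(q,p) = q ↔ p = q`. -/
theorem stmt_16 (I : Type*) (k : ℕ) (hk : 1 ≤ k) :
    (∀ p : I → Option {a : ZMod (2 * k + 1) // a ≠ 0}, MCLdelta p p = p) ∧
    (∀ p q : I → Option {a : ZMod (2 * k + 1) // a ≠ 0},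
      MCLle p q → MCLle (MCLdelta q p) q) ∧
    (∀ p q : I → Option {a : ZMod (2 * k + 1) // a ≠ 0},
      MCLle p q → MCLdelta q (MCLdelta q p) = p) ∧
    (∀ p q r : I → Option {a : ZMod (2 * k + 1) // a ≠ 0},
      MCLle p q → MCLle q r → MCLle (MCLdelta r p) (MCLdelta r q)) ∧
    (∀ p q : I → Option {a : ZMod (2 * k + 1) // a ≠ 0},
      MCLle p q → (MCLdelta q p = q ↔ p = q)) :=
  stmt_16_general I k
end
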